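/- arXiv:2505.02785 — 5 statements merged into one kernel-verified Lean document; each statement's English description precedes it below -/
import Mathlib

section
/- There is no infinite sequence of configurations C_0, C_1, C_2, … in which each C_{m+1} is obtained from C_m by a weight-decreasing ket-exchange step; equivalently, the relation 'C′ is obtained from C by a weight-decreasing ket-exchange step' on multisets over Fin k × Fin k is well-founded, so the agents exchange their kets only a finite number of times. -/
/-- The weight of a bra-ket `(i, j)`: `k` if `i = j`, and `(j - i) mod k` otherwise. -/
def wt (k : ℕ) (i j : Fin k) : ℕ :=
  if i = j then k else (((j : ℤ) - (i : ℤ)) % (k : ℤ)).toNat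

/-- A weight-decreasing ket-exchange step: two elements `(i, j)` and `(i', j')`
(counted with multiplicity) are replaced by `(i, j')` and `(i', j)`, under the
condition `min(w(i, j'), w(i', j)) < min(w(i, j), w(i', j'))`. -/
def DecStep (k : ℕ) (C C' : Multiset (Fin k × Fin k)) : Prop :=
  ∃ (i j i' j' : Fin k) (D : Multiset (Fin k × Fin k)),
    C = (i, j) ::ₘ (i', j') ::ₘ D ∧ C' = (i, j') ::ₘ (i', j) ::ₘ D ∧
    min (wt k i j') (wt k i' j) < min (wt k i j) (wt k i' j')

lemma wt_pos {k : ℕ} (hk : 1 ≤ k) (i j : Fin k) : 1 ≤ wt k i j := by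
  unfold wt
  split
  · omega
  · rename_i h
    have hk0 : (0:ℤ) < k := by exact_mod_cast hk
    have hmod : (0:ℤ) ≤ ((j:ℤ) - i) % k := Int.emod_nonneg _ (by omega)
    have hne : ((j:ℤ) - i) % k ≠ 0 := by
      intro h0
      obtain ⟨m, hm⟩ := Int.dvd_of_emod_eq_zero h0
      have hi : (i:ℤ) < k := by exact_mod_cast i.isLt
      have hj : (j:ℤ) < k := by exact_mod_cast j.isLt
      have hi0 : (0:ℤ) ≤ i := Int.ofNat_nonneg _
      have hj0 : (0:ℤ) ≤ j := Int.ofNat_nonneg _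
      have hij : (i:ℤ) ≠ j := by
        intro he
        exact h (Fin.ext (by exact_mod_cast he))
      have hm0 : m = 0 := by nlinarith
      rw [hm0, mul_zero] at hm
      omega
    omega

lemma wt_le {k : ℕ} (hk : 1 ≤ k) (i j : Fin k) : wt k i j ≤ k := by
  unfold wt
  split
  · omega
  · have hk0 : (0:ℤ) < k := by exact_mod_cast hk
    have := Int.emod_lt_of_pos ((j:ℤ) - i) hk0
    omega

lemma wt_modEq {k : ℕ} (hk : 1 ≤ k) (i j : Fin k) :
    ((wt k i j : ℤ)) ≡ ((j:ℤ) - i) [ZMOD k] := by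
  unfold wt
  split
  · rename_i h
    subst h
    simp [Int.ModEq]
  · have hk0 : (0:ℤ) < k := by exact_mod_cast hk
    have hmod : (0:ℤ) ≤ ((j:ℤ) - i) % k := Int.emod_nonneg _ (by omega)
    rw [Int.toNat_of_nonneg hmod]
    exact (Int.emod_emod_of_dvd _ dvd_rfl : _)

lemma key_arith {k a b c d : ℕ} (hk : 1 ≤ k)
    (ha1 : 1 ≤ a) (hb1 : 1 ≤ b) (hc1 : 1 ≤ c) (hd1 : 1 ≤ d)
    (hak : a ≤ k) (hbk : b ≤ k) (hck : c ≤ k) (hdk : d ≤ k)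
    (hdvd : (k:ℤ) ∣ ((c:ℤ) + d) - ((a:ℤ) + b))
    (h : min c d < min a b) :
    c + d ≤ a + b ∧ (c + d = a + b → a^2 + b^2 < c^2 + d^2) := by
  obtain ⟨m, hm⟩ := hdvd
  have hk0 : (0:ℤ) < k := by exact_mod_cast hk
  have hub : c + d < a + b + k := by omega
  have hm01 : m = 0 ∨ m = -1 := by
    rcases lt_trichotomy m 0 with hm' | hm' | hm'
    · rcases eq_or_lt_of_le (Int.add_one_le_iff.mpr hm') with he | hl
      · right; omega
      · exfalso
        have hmle : m ≤ -2 := by omega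
        have hle2k : ((a:ℤ) + b) - ((c:ℤ) + d) ≤ 2*k - 2 := by push_cast; omega
        nlinarith
    · left; exact hm'
    · exfalso
      have h1m : 1 ≤ m := hm'
      have hltk : ((c:ℤ) + d) - ((a:ℤ) + b) < k := by push_cast; omega
      nlinarith
  constructor
  · rcases hm01 with hm0 | hm0 <;> rw [hm0] at hm <;> push_cast at hm <;> omega
  · intro heq
    have hcases : (c < a ∧ c < b) ∨ (d < a ∧ d < b) := by omega
    have haZ : ((a:ℤ))^2 + ((b:ℤ))^2 < ((c:ℤ))^2 + ((d:ℤ))^2 := by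
      have heqZ : (c:ℤ) + d = (a:ℤ) + b := by exact_mod_cast heq
      rcases hcases with ⟨h1, h2⟩ | ⟨h1, h2⟩
      · have h1Z : (c:ℤ) < a := by exact_mod_cast h1
        have h2Z : (c:ℤ) < b := by exact_mod_cast h2
        nlinarith [mul_pos (sub_pos.mpr h1Z) (sub_pos.mpr h2Z)]
      · have h1Z : (d:ℤ) < a := by exact_mod_cast h1
        have h2Z : (d:ℤ) < b := by exact_mod_cast h2
        nlinarith [mul_pos (sub_pos.mpr h1Z) (sub_pos.mpr h2Z)]
    exact_mod_cast haZ

/-- Key arithmetic lemma. -/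
lemma key {k : ℕ} (hk : 1 ≤ k) (i j i' j' : Fin k)
    (h : min (wt k i j') (wt k i' j) < min (wt k i j) (wt k i' j')) :
    wt k i j' + wt k i' j ≤ wt k i j + wt k i' j' ∧
    (wt k i j' + wt k i' j = wt k i j + wt k i' j' →
      (wt k i j)^2 + (wt k i' j')^2 < (wt k i j')^2 + (wt k i' j)^2) := by
  have hcong : ((wt k i j : ℤ) + wt k i' j') ≡ ((wt k i j' : ℤ) + wt k i' j) [ZMOD k] := by
    have h1 := wt_modEq hk i j
    have h2 := wt_modEq hk i' j'
    have h3 := (wt_modEq hk i j').symm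
    have h4 := (wt_modEq hk i' j).symm
    calc ((wt k i j : ℤ) + wt k i' j')
        ≡ (((j:ℤ) - i) + ((j':ℤ) - i')) [ZMOD k] := h1.add h2
      _ = (((j':ℤ) - i) + ((j:ℤ) - i')) := by ring
      _ ≡ ((wt k i j' : ℤ) + wt k i' j) [ZMOD k] := h3.add h4
  exact key_arith hk (wt_pos hk i j) (wt_pos hk i' j') (wt_pos hk i j') (wt_pos hk i' j)
    (wt_le hk i j) (wt_le hk i' j') (wt_le hk i j') (wt_le hk i' j) hcong.dvd h

lemma sq_sum_le {k : ℕ} (hk : 1 ≤ k) (C : Multiset (Fin k × Fin k)) :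
    (C.map (fun p => (wt k p.1 p.2)^2)).sum ≤ k^2 * Multiset.card C := by
  have := Multiset.sum_le_card_nsmul (C.map (fun p => (wt k p.1 p.2)^2)) (k^2) ?_
  · simpa [mul_comm] using this
  · intro x hx
    obtain ⟨p, _, rfl⟩ := Multiset.mem_map.mp hx
    exact Nat.pow_le_pow_left (wt_le hk _ _) 2

/-- Theorem (Stabilization): the relation "`C'` is obtained from `C` by a
weight-decreasing ket-exchange step" is well-founded, i.e. there is no infinite
sequence of weight-decreasing ket exchanges. -/
theorem stabilization (k : ℕ) (hk : 1 ≤ k) :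
    WellFounded (fun C' C : Multiset (Fin k × Fin k) => DecStep k C C') := by
  set μ : Multiset (Fin k × Fin k) → ℕ × ℕ := fun C =>
    ((C.map (fun p => wt k p.1 p.2)).sum,
      k^2 * Multiset.card C - (C.map (fun p => (wt k p.1 p.2)^2)).sum) with hμ
  have hwf : WellFounded (InvImage (Prod.Lex (· < · : ℕ → ℕ → Prop) (· < ·)) μ) :=
    InvImage.wf μ (WellFounded.prod_lex Nat.lt_wfRel.wf Nat.lt_wfRel.wf)
  refine Subrelation.wf ?_ hwf
  rintro C' C ⟨i, j, i', j', D, rfl, rfl, hlt⟩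
  obtain ⟨hle, hsq⟩ := key hk i j i' j' hlt
  have hQ : (D.map (fun p => (wt k p.1 p.2)^2)).sum ≤ k^2 * Multiset.card D := sq_sum_le hk D
  simp only [InvImage, hμ, Multiset.map_cons, Multiset.sum_cons, Multiset.card_cons]
  rcases eq_or_lt_of_le hle with heq | hlt'
  · have h2 := hsq heq
    have harr : wt k i j' + (wt k i' j + (D.map (fun p => wt k p.1 p.2)).sum)
        = wt k i j + (wt k i' j' + (D.map (fun p => wt k p.1 p.2)).sum) := by omega
    rw [harr]
    apply Prod.Lex.right
    set A := (wt k i j)^2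
    set B := (wt k i' j')^2
    set CC := (wt k i j')^2
    set DD := (wt k i' j)^2
    have hCD : CC + DD + (D.map (fun p => (wt k p.1 p.2)^2)).sum
        ≤ k^2 * (Multiset.card D + 1 + 1) := by
      have hck : wt k i j' ≤ k := wt_le hk _ _
      have hdk : wt k i' j ≤ k := wt_le hk _ _
      have : CC ≤ k^2 := Nat.pow_le_pow_left hck 2
      have : DD ≤ k^2 := Nat.pow_le_pow_left hdk 2
      nlinarith [Nat.pow_le_pow_left hck 2, Nat.pow_le_pow_left hdk 2]
    omega
  · apply Prod.Lex.left
    omega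
end

section
/- Let M be a multiset of natural numbers of size n ≥ 2, let a, b ∈ M (counted with multiplicity), and let M′ be obtained from M by removing a and b and inserting natural numbers a′ and b′ with min(a′, b′) < min(a, b). Then the list of elements of M′ sorted in increasing order is strictly smaller, in the lexicographic order on lists of length n, than the list of elements of M sorted in increasing order. -/
/-!
Let `v = min a' b'`. Every `x < v` occurs equally often in `M` and `M'` (namely as often as in
`R`), while `v` occurs in `M'` strictly more often than in `M`, since `v < min a b`. Two
increasingly sorted lists of equal length with these count relations first differ at a position
where the first list holds `v` and the second list something larger.
-/

namespace List

variable {α : Type*} [LinearOrder α]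

theorem lex_lt_of_count_eq_of_count_lt {v : α} :
    ∀ {l₁ l₂ : List α}, l₁.Pairwise (· ≤ ·) → l₂.Pairwise (· ≤ ·) →
      l₁.length = l₂.length → (∀ x < v, l₁.count x = l₂.count x) →
      l₂.count v < l₁.count v → Lex (· < ·) l₁ l₂
  | [], [], _, _, _, _, hv => by simp at hv
  | x :: xs, y :: ys, hs₁, hs₂, hlen, hbelow, hv => by
    rcases lt_trichotomy x y with hxy | rfl | hyx
    · exact .rel hxy
    · refine .cons (lex_lt_of_count_eq_of_count_lt (v := v) hs₁.of_cons hs₂.of_cons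
        (by simpa using hlen) (fun z hz => ?_) ?_)
      · simpa [count_cons] using hbelow z hz
      · simpa [count_cons] using hv
    · -- `x` is the least element of `l₁`, yet `l₁` contains `y` (if `y < v`) or `v ≤ y`.
      exfalso
      have ⟨z, hz, hzy⟩ : ∃ z ∈ x :: xs, z ≤ y := by
        rcases lt_or_ge y v with hyv | hvy
        · refine ⟨y, count_pos_iff.mp ?_, le_rfl⟩
          rw [hbelow y hyv]
          exact count_pos_iff.mpr mem_cons_self
        · exact ⟨v, count_pos_iff.mp (by omega), hvy⟩
      rcases mem_cons.mp hz with rfl | hz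
      · exact hzy.not_gt hyx
      · exact (hzy.trans_lt hyx).not_ge (rel_of_pairwise_cons hs₁ hz)

end List

namespace Multiset

variable {α : Type*} [LinearOrder α]

theorem sort_lex_lt_of_count_eq_of_count_lt {s t : Multiset α} {v : α}
    (hcard : card s = card t) (hbelow : ∀ x < v, count x s = count x t)
    (hv : count v t < count v s) :
    List.Lex (· < ·) (s.sort (· ≤ ·)) (t.sort (· ≤ ·)) := by
  have hcount (u : Multiset α) (x : α) : (u.sort (· ≤ ·)).count x = count x u := by
    rw [← coe_count, sort_eq]
  refine List.lex_lt_of_count_eq_of_count_lt (v := v) (pairwise_sort _ _) (pairwise_sort _ _)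
    (by simpa using hcard) (fun x hx => ?_) ?_
  · simpa [hcount] using hbelow x hx
  · simpa [hcount] using hv

end Multiset

theorem sorted_lex_decrease_general
    (M M' : Multiset ℕ)
    (a b a' b' : ℕ) (R : Multiset ℕ)
    (hM : M = a ::ₘ b ::ₘ R) (hM' : M' = a' ::ₘ b' ::ₘ R)
    (hdec : min a' b' < min a b) :
    List.Lex (· < ·) (M'.sort (· ≤ ·)) (M.sort (· ≤ ·)) := by
  subst hM hM'
  apply Multiset.sort_lex_lt_of_count_eq_of_count_lt (v := min a' b') (by simp)
  · intro x hx
    have : x ≠ a ∧ x ≠ b ∧ x ≠ a' ∧ x ≠ b' := by omega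
    simp [this]
  · have : min a' b' ≠ a ∧ min a' b' ≠ b := by omega
    simp only [Multiset.count_cons, this, if_false, add_zero]
    split_ifs <;> omega

/-- If a multiset `M` of naturals of size `n ≥ 2` contains `a` and `b`
(with multiplicity), and `M'` is obtained from `M` by removing `a` and `b` and
inserting `a'` and `b'` with `min a' b' < min a b`, then the increasingly sorted
list of `M'` is lexicographically strictly smaller than that of `M`. -/
theorem sorted_lex_decrease (n : ℕ) (hn : 2 ≤ n)
    (M M' : Multiset ℕ) (hcard : M.card = n)
    (a b a' b' : ℕ) (R : Multiset ℕ)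
    (hM : M = a ::ₘ b ::ₘ R) (hM' : M' = a' ::ₘ b' ::ₘ R)
    (hdec : min a' b' < min a b) :
    List.Lex (· < ·) (M'.sort (· ≤ ·)) (M.sort (· ≤ ·)) :=
  sorted_lex_decrease_general M M' a b a' b' R hM hM' hdec
end

section
/- Let k ≥ 1 and let a, b, i, j ∈ [0, k−1] with a ≠ b, i ≠ a, j ≠ b, and such that neither i nor j lies in the cyclic open interval (a, b)_k. Then min(w(a, b), w(i, j)) < min(w(a, j), w(i, b)); that is, exchanging the kets of two agents with bra-kets (a, j) and (i, b) — producing bra-kets (a, b) and (i, j) — strictly decreases the minimum weight of their two bra-kets. -/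
/-- `c` lies in the cyclic open interval `(a, b)_k`:
`0 < (c − a) mod k < (b − a) mod k`. -/
def inCyclicOpen (k : ℕ) (a b c : Fin k) : Prop :=
  0 < ((c : ℤ) - (a : ℤ)) % (k : ℤ) ∧
    ((c : ℤ) - (a : ℤ)) % (k : ℤ) < ((b : ℤ) - (a : ℤ)) % (k : ℤ)

/-!
Measure every color by its clockwise distance `(c - a) mod k` from `a`. A color outside
`(a, b)_k` other than `a` and `b` lies strictly beyond `b`, so going clockwise from `a`
to `j`, or from `i` round to `b`, is longer than going from `a` to `b`. Hence `w(a, b)` is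
smaller than both `w(a, j)` and `w(i, b)`, which already bounds the left-hand minimum.
-/

section

variable {k : ℕ}

lemma wt_self (i : Fin k) : wt k i i = k := if_pos rfl

lemma wt_of_ne {i j : Fin k} (h : i ≠ j) : wt k i j = (j - i : Fin k) := by
  rw [wt, if_neg h, ← Fin.coe_int_sub_eq_mod, Int.toNat_natCast]

lemma inCyclicOpen_iff (a b c : Fin k) :
    inCyclicOpen k a b c ↔ 0 < ((c - a : Fin k) : ℕ) ∧ (c - a : Fin k) < (b - a : Fin k) := by
  simp only [inCyclicOpen, ← Fin.coe_int_sub_eq_mod, Fin.lt_def]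
  omega

lemma sub_lt_sub_of_not_inCyclicOpen {a b c : Fin k} (hca : c ≠ a) (hcb : c ≠ b)
    (hc : ¬ inCyclicOpen k a b c) : b - a < c - a := by
  have : NeZero k := NeZero.of_pos a.pos
  have hpos : 0 < ((c - a : Fin k) : ℕ) :=
    Nat.pos_of_ne_zero fun h => hca (sub_eq_zero.mp (Fin.ext h))
  have hne : c - a ≠ b - a := fun h => hcb (sub_left_inj.mp h)
  rw [inCyclicOpen_iff] at hc
  rw [Fin.lt_def] at hc ⊢
  rw [Ne, Fin.ext_iff] at hne
  omega

lemma wt_lt_wt_right {a b j : Fin k} (hab : a ≠ b) (hjb : j ≠ b)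
    (hj : ¬ inCyclicOpen k a b j) : wt k a b < wt k a j := by
  rw [wt_of_ne hab]
  by_cases hja : j = a
  · rw [hja, wt_self]
    exact Fin.is_lt _
  · rw [wt_of_ne (Ne.symm hja)]
    exact sub_lt_sub_of_not_inCyclicOpen hja hjb hj

lemma wt_lt_wt_left {a b i : Fin k} (hab : a ≠ b) (hia : i ≠ a)
    (hi : ¬ inCyclicOpen k a b i) : wt k a b < wt k i b := by
  rw [wt_of_ne hab]
  by_cases hib : i = b
  · rw [hib, wt_self]
    exact Fin.is_lt _
  · have : NeZero k := NeZero.of_pos a.pos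
    have hlt := sub_lt_sub_of_not_inCyclicOpen hia hib hi
    have hwrap : ((b - a - (i - a) : Fin k) : ℕ) = k + (b - a : Fin k) - (i - a : Fin k) :=
      Fin.coe_sub_iff_lt.mpr hlt
    rw [wt_of_ne hib, ← sub_sub_sub_cancel_right b i a, hwrap]
    have := Fin.is_lt (i - a)
    omega

end

theorem ket_exchange_decreases_general (k : ℕ) (a b i j : Fin k)
    (hab : a ≠ b) (hia : i ≠ a) (hjb : j ≠ b)
    (hi : ¬ inCyclicOpen k a b i) (hj : ¬ inCyclicOpen k a b j) :
    min (wt k a b) (wt k i j) < min (wt k a j) (wt k i b) :=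
  (min_le_left _ _).trans_lt
    (lt_min (wt_lt_wt_right hab hjb hj) (wt_lt_wt_left hab hia hi))

/-- If `a ≠ b`, `i ≠ a`, `j ≠ b` and neither `i` nor `j` lies in the cyclic open
interval `(a, b)_k`, then exchanging the kets of two agents with bra-kets
`(a, j)` and `(i, b)` — producing `(a, b)` and `(i, j)` — strictly decreases the
minimum weight of their two bra-kets. -/
theorem ket_exchange_decreases (k : ℕ) (hk : 1 ≤ k) (a b i j : Fin k)
    (hab : a ≠ b) (hia : i ≠ a) (hjb : j ≠ b)
    (hi : ¬ inCyclicOpen k a b i) (hj : ¬ inCyclicOpen k a b j) :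
    min (wt k a b) (wt k i j) < min (wt k a j) (wt k i b) :=
  ket_exchange_decreases_general k a b i j hab hia hjb hi hj
end

section
/- Let c : Fin k → ℕ be an input assignment with total population n = Σ_i c(i) ≥ 1 and a unique relative-majority color μ (i.e., c(μ) > c(j) for every color j ≠ μ). Let M be a stable multiset over Fin k × Fin k such that, for every color i, the number of elements of M with bra equal to i and the number with ket equal to i both equal c(i). Then M contains at least one copy of the bra-ket (μ, μ), and M contains no bra-ket of the form (j, j) for any color j ≠ μ. -/
namespace StableMaj

/-- cyclic distance from `i` to `j`, as a natural number in `[0, k)`. -/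
def dd (k : ℕ) (i j : Fin k) : ℕ :=
  if i.val ≤ j.val then j.val - i.val else k + j.val - i.val

lemma dd_lt {k : ℕ} (i j : Fin k) : dd k i j < k := by
  have hi := i.isLt; have hj := j.isLt
  unfold dd; split <;> omega

lemma dd_eq_zero_iff {k : ℕ} (i j : Fin k) : dd k i j = 0 ↔ i = j := by
  have hi := i.isLt; have hj := j.isLt
  unfold dd; rw [Fin.ext_iff]; split <;> omega

lemma dd_cocycle {k : ℕ} (i j l : Fin k) :
    dd k i j + dd k j l = dd k i l ∨ dd k i j + dd k j l = dd k i l + k := by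
  have hi := i.isLt; have hj := j.isLt; have hl := l.isLt
  unfold dd; split_ifs <;> omega

lemma wt_diag {k : ℕ} (i : Fin k) : wt k i i = k := by simp [wt]

lemma wt_eq' {k : ℕ} {i j : Fin k} (h : i ≠ j) : wt k i j = dd k i j := by
  have hi := i.isLt; have hj := j.isLt
  have hij : i.val ≠ j.val := fun hh => h (Fin.ext hh)
  unfold wt dd
  rw [if_neg h]
  rcases le_or_gt i.val j.val with hle | hlt
  · rw [if_pos hle]
    have h0 : (0 : ℤ) ≤ (j : ℤ) - (i : ℤ) := by omega
    have h1 : (j : ℤ) - (i : ℤ) < (k : ℤ) := by omega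
    rw [Int.emod_eq_of_lt h0 h1]
    omega
  · rw [if_neg (by omega)]
    have e : ((j : ℤ) - (i : ℤ)) % (k : ℤ) = (j : ℤ) - (i : ℤ) + (k : ℤ) := by
      have h1 : ((j : ℤ) - (i : ℤ) + (k : ℤ) * 1) % (k : ℤ) = ((j : ℤ) - (i : ℤ)) % (k : ℤ) :=
        Int.add_mul_emod_self_left _ _ _
      have h2 : ((j : ℤ) - (i : ℤ) + (k : ℤ)) % (k : ℤ) = (j : ℤ) - (i : ℤ) + (k : ℤ) :=
        Int.emod_eq_of_lt (by omega) (by omega)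
      rw [mul_one] at h1
      omega
    rw [e]; omega

lemma wt_le {k : ℕ} (i j : Fin k) : wt k i j ≤ k := by
  rcases eq_or_ne i j with h | h
  · rw [h, wt_diag]
  · rw [wt_eq' h]; exact le_of_lt (dd_lt i j)

lemma stab_pair {k : ℕ} {M : Multiset (Fin k × Fin k)}
    (hstable : ∀ M' : Multiset (Fin k × Fin k), ¬ DecStep k M M')
    {p q : Fin k × Fin k} (hp : p ∈ M) (hq : q ∈ M.erase p) :
    ¬ (min (wt k p.1 q.2) (wt k q.1 p.2) < min (wt k p.1 p.2) (wt k q.1 q.2)) := by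
  intro hlt
  exact hstable ((p.1, q.2) ::ₘ (q.1, p.2) ::ₘ (M.erase p).erase q)
    ⟨p.1, p.2, q.1, q.2, (M.erase p).erase q, by
      rw [Prod.mk.eta, Prod.mk.eta, Multiset.cons_erase hq, Multiset.cons_erase hp],
      rfl, hlt⟩

lemma card_filter_comp {α β : Type*} [DecidableEq α] [DecidableEq β] [Fintype β]
    (s : Multiset α) (f : α → β) (Q : β → Prop) [DecidablePred Q] :
    (s.filter (fun p => Q (f p))).card
      = ∑ y ∈ Finset.univ.filter Q, (s.filter (fun p => f p = y)).card := by
  induction s using Multiset.induction with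
  | empty => simp
  | cons p s ih =>
    simp only [Multiset.filter_cons, Multiset.card_add, ih, Finset.sum_add_distrib]
    congr 1
    have h1 : ∀ y : β, (if f p = y then ({p} : Multiset α) else 0).card
        = if f p = y then 1 else 0 := by
      intro y; split <;> simp
    simp only [h1]
    rw [Finset.sum_ite_eq (Finset.univ.filter Q) (f p) (fun _ => 1)]
    by_cases hQ : Q (f p) <;> simp [hQ]

/-- The key counting lemma: if every diagonal element of `M` is `(a, a)` and no
nondiagonal element has `a` strictly in its interior, then
`c x + mult(a,a) ≤ c a` for every `x ≠ a`. -/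
lemma count_le {k : ℕ} (c : Fin k → ℕ) (M : Multiset (Fin k × Fin k))
    (hbra : ∀ i : Fin k, (M.filter (fun p => p.1 = i)).card = c i)
    (hket : ∀ i : Fin k, (M.filter (fun p => p.2 = i)).card = c i)
    (a x : Fin k) (hxa : x ≠ a)
    (H1 : ∀ p ∈ M, p.1 = p.2 → p = (a, a))
    (H2 : ∀ p ∈ M, p.1 ≠ p.2 → p.1 ≠ a → ¬ (dd k p.1 a < dd k p.1 p.2)) :
    c x + M.count (a, a) ≤ c a := by
  classical
  set t := dd k a x with ht
  have htpos : 0 < t :=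
    Nat.pos_of_ne_zero (fun hh => hxa (((dd_eq_zero_iff a x).mp hh).symm))
  have htk : t < k := dd_lt a x
  set g : Fin k × Fin k → ℕ := fun p => if p.2 = a then k else dd k a p.2 with hg
  -- Key structural fact: bra position is strictly less than ket position.
  have KS : ∀ p ∈ M, dd k a p.1 < g p := by
    intro p hp
    by_cases hd : p.1 = p.2
    · have hpa := H1 p hp hd
      have hz : dd k a a = 0 := (dd_eq_zero_iff a a).mpr rfl
      have hgp : g p = k := by rw [hpa]; simp [hg]
      have hfst : p.1 = a := by rw [hpa]
      rw [hgp, hfst, hz]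
      omega
    · by_cases h2a : p.2 = a
      · simp only [hg]; rw [if_pos h2a]; exact dd_lt a p.1
      · simp only [hg]; rw [if_neg h2a]
        have hco := dd_cocycle a p.1 p.2
        have h1 : 0 < dd k p.1 p.2 :=
          Nat.pos_of_ne_zero (fun hh => hd ((dd_eq_zero_iff _ _).mp hh))
        have hb1 := dd_lt a p.1
        rcases hco with h | h
        · omega
        · exfalso
          have h1a : p.1 ≠ a := by
            intro he
            have h0 : dd k a p.1 = 0 := (dd_eq_zero_iff a p.1).mpr he.symm
            have := dd_lt p.1 p.2
            omega
          apply H2 p hp hd h1a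
          have hc2 := dd_cocycle a p.1 a
          have hz : dd k a a = 0 := (dd_eq_zero_iff a a).mpr rfl
          have hpos1 : 0 < dd k a p.1 :=
            Nat.pos_of_ne_zero (fun hh => h1a (((dd_eq_zero_iff a p.1).mp hh).symm))
          have hpos2 : 0 < dd k p.1 a :=
            Nat.pos_of_ne_zero (fun hh => h1a ((dd_eq_zero_iff p.1 a).mp hh))
          have hpos3 : 0 < dd k a p.2 :=
            Nat.pos_of_ne_zero (fun hh => h2a (((dd_eq_zero_iff a p.2).mp hh).symm))
          omega
  -- cardinalities
  have hB : (M.filter (fun p => dd k a p.1 < t)).card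
      = ∑ y ∈ Finset.univ.filter (fun y => dd k a y < t), c y := by
    rw [card_filter_comp M Prod.fst (fun y => dd k a y < t)]
    exact Finset.sum_congr rfl (fun y _ => hbra y)
  have hK : (M.filter (fun p => g p < t)).card
      = ∑ y ∈ Finset.univ.filter (fun y => (if y = a then k else dd k a y) < t), c y := by
    rw [show (M.filter (fun p => g p < t))
        = (M.filter (fun p => (if p.2 = a then k else dd k a p.2) < t)) from rfl]
    rw [card_filter_comp M Prod.snd (fun y => (if y = a then k else dd k a y) < t)]
    exact Finset.sum_congr rfl (fun y _ => hket y)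
  have hnotmem : a ∉ Finset.univ.filter (fun y => (if y = a then k else dd k a y) < t) := by
    simp only [Finset.mem_filter, Finset.mem_univ, true_and, eq_self_iff_true, if_true]
    omega
  have hsets : Finset.univ.filter (fun y => dd k a y < t)
      = insert a (Finset.univ.filter (fun y => (if y = a then k else dd k a y) < t)) := by
    ext y
    simp only [Finset.mem_filter, Finset.mem_insert, Finset.mem_univ, true_and]
    by_cases hy : y = a
    · rw [hy]
      have hz : dd k a a = 0 := (dd_eq_zero_iff a a).mpr rfl
      simp [hz, htpos]
    · simp only [if_neg hy]
      constructor
      · exact fun h => Or.inr h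
      · rintro (h | h)
        · exact absurd h hy
        · exact h
  have hBK : (M.filter (fun p => dd k a p.1 < t)).card
      = c a + (M.filter (fun p => g p < t)).card := by
    rw [hB, hK, hsets, Finset.sum_insert hnotmem]
  -- split the bra-filter by the ket condition
  have hsplit : (M.filter (fun p => dd k a p.1 < t)).card
      = (M.filter (fun p => (g p < t) ∧ dd k a p.1 < t)).card
        + (M.filter (fun p => ¬ (g p < t) ∧ dd k a p.1 < t)).card := by
    have h0 := Multiset.filter_add_not (fun p => g p < t) (M.filter (fun p => dd k a p.1 < t))
    have h1 := congrArg Multiset.card h0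
    rw [Multiset.card_add, Multiset.filter_filter, Multiset.filter_filter] at h1
    omega
  have hAB : (M.filter (fun p => (g p < t) ∧ dd k a p.1 < t))
      = (M.filter (fun p => g p < t)) := by
    apply Multiset.filter_congr
    intro p hp
    constructor
    · exact fun h => h.1
    · exact fun h => ⟨h, lt_trans (KS p hp) h⟩
  set Cr := M.filter (fun p => ¬ (g p < t) ∧ dd k a p.1 < t) with hCr
  have hCrcard : Cr.card = c a := by
    have h2 := hsplit
    rw [hAB, hBK] at h2
    omega
  -- lower bound for Cr
  have hketx : (M.filter (fun p => p.2 = x)) = Cr.filter (fun p => p.2 = x) := by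
    rw [hCr, Multiset.filter_filter]
    apply Multiset.filter_congr
    intro p hp
    have hks := KS p hp
    constructor
    · intro h2
      have hgt : g p = t := by
        simp only [hg]
        rw [h2, if_neg hxa, ht]
      exact ⟨h2, by omega, by omega⟩
    · exact fun h => h.1
  have hsplit2 : Cr.card = (Cr.filter (fun p => p.2 = x)).card
      + (Cr.filter (fun p => ¬ p.2 = x)).card := by
    rw [← Multiset.card_add, Multiset.filter_add_not]
  have hcx : (Cr.filter (fun p => p.2 = x)).card = c x := by
    rw [← hketx]; exact hket x
  have hcount : M.count (a, a) ≤ (Cr.filter (fun p => ¬ p.2 = x)).card := by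
    refine le_trans ?_ (Multiset.count_le_card (a, a) _)
    rw [hCr, Multiset.filter_filter, Multiset.count_filter]
    have hz : dd k a a = 0 := (dd_eq_zero_iff a a).mpr rfl
    have hcond : (¬ (a, a).2 = x ∧ ¬ (g (a, a) < t) ∧ dd k a (a, a).1 < t) := by
      refine ⟨?_, ?_, ?_⟩
      · exact fun h => hxa h.symm
      · have hgk : g (a, a) = k := by simp [hg]
        omega
      · simpa [hz] using htpos
    rw [if_pos hcond]
  omega

end StableMaj

/-- If `μ` is the unique relative-majority color of `c` and `M` is a stable
configuration whose bra counts and ket counts both agree with `c`, then `M`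
contains the bra-ket `(μ, μ)` and no bra-ket `(j, j)` for `j ≠ μ`. -/
theorem stable_majority_diag {k : ℕ} (c : Fin k → ℕ) (hn : 1 ≤ ∑ i, c i)
    (μ : Fin k) (hmaj : ∀ j : Fin k, j ≠ μ → c j < c μ)
    (M : Multiset (Fin k × Fin k))
    (hbra : ∀ i : Fin k, (M.filter (fun p => p.1 = i)).card = c i)
    (hket : ∀ i : Fin k, (M.filter (fun p => p.2 = i)).card = c i)
    (hstable : ∀ M' : Multiset (Fin k × Fin k), ¬ DecStep k M M') :
    (μ, μ) ∈ M ∧ ∀ j : Fin k, j ≠ μ → (j, j) ∉ M := by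
  classical
  open StableMaj in
  -- any diagonal element is a strict majority color
  have diagLem : ∀ b : Fin k, (b, b) ∈ M → ∀ x : Fin k, x ≠ b → c x < c b := by
    intro b hb x hxb
    have H1 : ∀ p ∈ M, p.1 = p.2 → p = (b, b) := by
      intro p hp hd
      by_contra hne
      have hq : p ∈ M.erase (b, b) := (Multiset.mem_erase_of_ne hne).mpr hp
      apply stab_pair hstable hb hq
      have h1b : p.1 ≠ b := by
        intro hh
        exact hne (Prod.ext hh (hd ▸ hh))
      have e1 : wt k b b = k := wt_diag b
      have e2 : wt k p.1 p.2 = k := by rw [← hd]; exact wt_diag p.1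
      have e3 : wt k p.1 b = dd k p.1 b := wt_eq' h1b
      have e4 := dd_lt p.1 b
      rw [e1, e2, e3]
      omega
    have H2 : ∀ p ∈ M, p.1 ≠ p.2 → p.1 ≠ b → ¬ (dd k p.1 b < dd k p.1 p.2) := by
      intro p hp hd h1b hlt
      have hne : p ≠ (b, b) := by
        intro h
        rw [h] at hd
        exact hd rfl
      have hq : p ∈ M.erase (b, b) := (Multiset.mem_erase_of_ne hne).mpr hp
      apply stab_pair hstable hb hq
      have e1 : wt k b b = k := wt_diag b
      have e2 : wt k p.1 p.2 = dd k p.1 p.2 := wt_eq' hd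
      have e3 : wt k p.1 b = dd k p.1 b := wt_eq' h1b
      have e4 := dd_lt p.1 p.2
      rw [e1, e2, e3]
      omega
    have hle := count_le c M hbra hket b x hxb H1 H2
    have hcnt : 0 < M.count (b, b) := Multiset.count_pos.mpr hb
    omega
  have part2 : ∀ j : Fin k, j ≠ μ → (j, j) ∉ M := by
    intro j hj hmem
    have h1 := diagLem j hmem μ (Ne.symm hj)
    have h2 := hmaj j hj
    omega
  refine ⟨?_, part2⟩
  by_contra hno
  have nodiag : ∀ p ∈ M, p.1 ≠ p.2 := by
    intro p hp hd
    have hpd : p = (p.1, p.1) := Prod.ext rfl hd.symm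
    rw [hpd] at hp
    by_cases he : p.1 = μ
    · rw [he] at hp
      exact hno hp
    · have h1 := diagLem p.1 hp μ (Ne.symm he)
      have h2 := hmaj p.1 he
      omega
  have hM0 : M ≠ 0 := by
    intro h
    have hz : ∀ i : Fin k, c i = 0 := fun i => by rw [← hbra i, h]; simp
    simp only [hz, Finset.sum_const_zero] at hn
    omega
  obtain ⟨p₀, hp₀⟩ := Multiset.exists_mem_of_ne_zero hM0
  obtain ⟨q₀, hq₀mem, hq₀max⟩ :=
    M.toFinset.exists_max_image (fun p => wt k p.1 p.2) ⟨p₀, Multiset.mem_toFinset.mpr hp₀⟩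
  have hq₀ : q₀ ∈ M := Multiset.mem_toFinset.mp hq₀mem
  have hmax : ∀ q ∈ M, wt k q.1 q.2 ≤ wt k q₀.1 q₀.2 :=
    fun q hq => hq₀max q (Multiset.mem_toFinset.mpr hq)
  have hij : q₀.1 ≠ q₀.2 := nodiag q₀ hq₀
  have passfree : ∀ z : Fin k, (z = q₀.1 ∨ z = q₀.2) →
      ∀ p ∈ M, p.1 ≠ p.2 → p.1 ≠ z → ¬ (dd k p.1 z < dd k p.1 p.2) := by
    intro z hz p hp hd h1z hlt
    have hpq : p ≠ q₀ := by
      rcases hz with h | h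
      · intro he
        rw [he, ← h] at h1z
        exact h1z rfl
      · intro he
        rw [he, ← h] at hlt
        exact lt_irrefl _ hlt
    have hq : p ∈ M.erase q₀ := (Multiset.mem_erase_of_ne hpq).mpr hp
    apply stab_pair hstable hq₀ hq
    have ep : wt k p.1 p.2 = dd k p.1 p.2 := wt_eq' hd
    have eq0 : wt k q₀.1 q₀.2 = dd k q₀.1 q₀.2 := wt_eq' hij
    have hmaxp := hmax p hp
    have hbp := dd_lt p.1 p.2
    have hbq := dd_lt q₀.1 q₀.2
    rcases hz with h | h
    · -- z = q₀.1, strictly inside p; show wt q₀.1 p.2 < dd p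
      subst h
      have hco := dd_cocycle p.1 q₀.1 p.2
      have hpos1 : 0 < dd k p.1 q₀.1 :=
        Nat.pos_of_ne_zero (fun hh => h1z ((dd_eq_zero_iff p.1 q₀.1).mp hh))
      have hz2 : q₀.1 ≠ p.2 := by
        intro he
        have h0 : dd k q₀.1 p.2 = 0 := (dd_eq_zero_iff q₀.1 p.2).mpr he
        omega
      have ew : wt k q₀.1 p.2 = dd k q₀.1 p.2 := wt_eq' hz2
      have hbz := dd_lt q₀.1 p.2
      rw [ep, eq0, ew]
      rw [ep, eq0] at hmaxp
      omega
    · -- z = q₀.2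
      subst h
      have ew : wt k p.1 q₀.2 = dd k p.1 q₀.2 := wt_eq' h1z
      rw [ep, eq0, ew]
      rw [ep, eq0] at hmaxp
      omega
  set z : Fin k := if q₀.1 = μ then q₀.2 else q₀.1 with hzdef
  have hzor : z = q₀.1 ∨ z = q₀.2 := by
    rw [hzdef]
    split
    · exact Or.inr rfl
    · exact Or.inl rfl
  have hzμ : z ≠ μ := by
    rw [hzdef]
    split
    · rename_i h
      intro hh
      exact hij (h.trans hh.symm)
    · rename_i h
      exact h
  have H1 : ∀ p ∈ M, p.1 = p.2 → p = (z, z) := fun p hp hd => absurd hd (nodiag p hp)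
  have hle := count_le c M hbra hket z μ (Ne.symm hzμ) H1 (passfree z hzor)
  have := hmaj z hzμ
  omega
end

section
/- Consider a run of the PRM protocol on n ≥ 1 agents with input color assignment χ : Fin n → Fin k that has a unique relative-majority color μ (i.e., strictly more agents have input color μ than any other color), under a weakly fair schedule σ. Then all agents eventually output μ forever: there exists a time T such that for all t ≥ T and all agents a, the out value of agent a at time t equals μ. -/
/-- The state of an agent in the PRM protocol: a bra-ket `(bra, ket)` together
with an output value `out`, all colors in `Fin k`. -/
structure AgentState (k : ℕ) where
  bra : Fin k
  ket : Fin k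
  out : Fin k

/-- One interaction of the PRM protocol between two agents: they exchange their
kets if this strictly decreases the minimum weight of their two bra-kets; then,
if either agent has a bra-ket of the form `(i, i)`, both set their out value to `i`. -/
def interact {k : ℕ} (s t : AgentState k) : AgentState k × AgentState k :=
  let s1 : AgentState k :=
    if min (wt k s.bra t.ket) (wt k t.bra s.ket) < min (wt k s.bra s.ket) (wt k t.bra t.ket)
      then ⟨s.bra, t.ket, s.out⟩ else s
  let t1 : AgentState k :=
    if min (wt k s.bra t.ket) (wt k t.bra s.ket) < min (wt k s.bra s.ket) (wt k t.bra t.ket)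
      then ⟨t.bra, s.ket, t.out⟩ else t
  if s1.bra = s1.ket then (⟨s1.bra, s1.ket, s1.bra⟩, ⟨t1.bra, t1.ket, s1.bra⟩)
  else if t1.bra = t1.ket then (⟨s1.bra, s1.ket, t1.bra⟩, ⟨t1.bra, t1.ket, t1.bra⟩)
  else (s1, t1)

/-- The run of the PRM protocol on `n` agents with input colors `χ` under
schedule `σ`: `run χ σ t a` is the state of agent `a` at time `t`. -/
def run {k n : ℕ} (χ : Fin n → Fin k) (σ : ℕ → Fin n × Fin n) :
    ℕ → Fin n → AgentState k
  | 0 => fun a => ⟨χ a, χ a, χ a⟩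
  | t + 1 => fun a =>
    let st := run χ σ t
    let p := (σ t).1
    let q := (σ t).2
    if a = p then (interact (st p) (st q)).1
    else if a = q then (interact (st p) (st q)).2
    else st a

/-!
Bras never change and a swap exchanges two kets, so the kets are always a permutation of the input
colors. A swap either lowers the total weight by `k`, or keeps it and moves the two weights apart;
hence `∑ (2k+1)w - w²` strictly decreases at every swap, and swaps stop after finite time. Weak
fairness then makes the frozen configuration stable: no pair of agents would swap.

Think of agent `a` as the arc of colors from its bra up to, excluding, its ket; a diagonal agent
covers every color. As kets permute bras, every color is covered by the same number `C` of arcs; a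
color has at most `C` votes unless some diagonal agent has that color, and exactly `C` votes if the
only arcs crossing into it are diagonal ones of that color. Stability forbids a non-diagonal arc to
cross into the bra or the ket of an agent `b` of maximal weight. If `b` is diagonal, all diagonal
agents share its color, which gets `C` votes, whereas `μ` would get at most `C` if it were another
color. Otherwise no agent is diagonal and the two distinct colors of `b` both get `C` votes,
against at most `C` for `μ`. So diagonal agents exist and all have color `μ`; every agent adopts
`μ` when it meets one of them and keeps it forever.
-/

open Finset Filter

namespace PRM

section FinArith

variable {k : ℕ} [NeZero k]

lemma val_add_one_of_ne_zero {x : Fin k} (h : x + 1 ≠ 0) : (x + 1).val = x.val + 1 := by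
  apply Fin.val_add_one_of_lt'
  by_contra hx
  have hk : x.val + 1 = k := by have := x.isLt; omega
  apply h
  ext
  rw [Fin.val_add, Fin.val_one', Nat.add_mod_mod, hk, Nat.mod_self, Fin.val_zero]

lemma val_eq_of_add_one_eq_zero {x : Fin k} (h : x + 1 = 0) : x.val = k - 1 := by
  have h' := congrArg Fin.val h
  rw [Fin.val_add, Fin.val_one', Nat.add_mod_mod, Fin.val_zero] at h'
  have := Nat.le_of_dvd (Nat.succ_pos _) (Nat.dvd_of_mod_eq_zero h')
  have := x.isLt
  omega

lemma apply_eq_apply_zero_of_add_one {β : Type*} {f : Fin k → β} (h : ∀ c, f (c + 1) = f c)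
    (c : Fin k) : f c = f 0 := by
  suffices ∀ j : ℕ, ∀ c : Fin k, c.val = j → f c = f 0 from this _ c rfl
  intro j
  induction j with
  | zero => intro c hc; rw [Fin.val_eq_zero_iff.mp hc]
  | succ j ih =>
    intro c hc
    have hval := val_add_one_of_ne_zero (x := c - 1) (by
      rw [sub_add_cancel]; rintro rfl; rw [Fin.val_zero] at hc; omega)
    rw [sub_add_cancel] at hval
    rw [← sub_add_cancel c 1, h, ih _ (by omega)]

end FinArith

section Counting

variable {α : Type*} [Fintype α]

lemma card_filter_eq_add (p q : α → Prop) [DecidablePred p] [DecidablePred q] :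
    #{a | p a} = #{a | p a ∧ q a} + #{a | p a ∧ ¬ q a} := by
  rw [← card_filter_add_card_filter_not (s := {a | p a}) q, filter_filter, filter_filter]

lemma card_eq_and_ne_eq_of_card_eq {β : Type*} [DecidableEq β] {f g : α → β} {c : β}
    (h : #{a | f a = c} = #{a | g a = c}) :
    #{a | f a = c ∧ g a ≠ f a} = #{a | g a = c ∧ g a ≠ f a} := by
  have hf := card_filter_eq_add (fun a => f a = c) (fun a => g a = f a)
  have hg := card_filter_eq_add (fun a => g a = c) (fun a => g a = f a)
  have hfix : #{a | f a = c ∧ g a = f a} = #{a | g a = c ∧ g a = f a} := by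
    congr 1
    ext a
    simp only [mem_filter, mem_univ, true_and]
    exact ⟨fun ⟨h1, h2⟩ => ⟨h2 ▸ h1, h2⟩, fun ⟨h1, h2⟩ => ⟨h2 ▸ h1, h2⟩⟩
  simp only [← ne_eq] at hf hg
  omega

lemma sum_lt_sum_of_eq_off_pair [DecidableEq α] {f g : α → ℕ} {p q : α} (hpq : p ≠ q)
    (h : ∀ a, a ≠ p → a ≠ q → f a = g a) (hlt : f p + f q < g p + g q) :
    ∑ a, f a < ∑ a, g a := by
  have hq : q ∈ univ.erase p := mem_erase.mpr ⟨hpq.symm, mem_univ q⟩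
  have hrest : ∑ a ∈ (univ.erase p).erase q, f a = ∑ a ∈ (univ.erase p).erase q, g a :=
    sum_congr rfl fun a ha => h a (ne_of_mem_erase (mem_of_mem_erase ha)) (ne_of_mem_erase ha)
  rw [← add_sum_erase _ f (mem_univ p), ← add_sum_erase _ f hq,
    ← add_sum_erase _ g (mem_univ p), ← add_sum_erase _ g hq, hrest]
  omega

end Counting

section Weight

variable {k : ℕ}

lemma wt_self (i : Fin k) : wt k i i = k := by simp [wt]

lemma wt_of_ne {i j : Fin k} (h : i ≠ j) : wt k i j = (j - i).val := by
  have key : ((j : ℤ) - i) % k = ((k - i + j : ℕ) : ℤ) % k := by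
    rw [Nat.cast_add, Nat.cast_sub i.isLt.le, sub_add_eq_add_sub, add_sub_assoc, add_comm,
      Int.add_emod_right]
  rw [wt, if_neg h, key, Fin.val_sub, ← Int.natCast_mod, Int.toNat_natCast]

lemma wt_le (i j : Fin k) : wt k i j ≤ k := by
  by_cases h : i = j
  · rw [h, wt_self]
  · rw [wt_of_ne h]; exact (j - i).isLt.le

lemma wt_lt_of_ne {i j : Fin k} (h : i ≠ j) : wt k i j < k := by
  rw [wt_of_ne h]; exact (j - i).isLt

variable [NeZero k]

lemma wt_pos (i j : Fin k) : 0 < wt k i j := by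
  by_cases h : i = j
  · rw [h, wt_self]; exact Nat.pos_of_neZero k
  · rw [wt_of_ne h, Fin.val_pos_iff, Fin.pos_iff_ne_zero, sub_ne_zero]; exact Ne.symm h

lemma wt_modEq (i j : Fin k) : wt k i j ≡ (j - i).val [MOD k] := by
  by_cases h : i = j
  · rw [h, wt_self, sub_self, Fin.val_zero]; exact Nat.mod_self k
  · rw [wt_of_ne h]

lemma wt_add_wt_modEq (i i' j j' : Fin k) :
    wt k i j' + wt k i' j ≡ wt k i j + wt k i' j' [MOD k] := by
  have hsum : (j' - i) + (j - i') = (j - i) + (j' - i') := by abel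
  calc wt k i j' + wt k i' j ≡ (j' - i).val + (j - i').val [MOD k] :=
        (wt_modEq i j').add (wt_modEq i' j)
    _ ≡ ((j' - i) + (j - i')).val [MOD k] := by rw [Fin.val_add]; exact (Nat.mod_modEq _ _).symm
    _ = ((j - i) + (j' - i')).val := by rw [hsum]
    _ ≡ (j - i).val + (j' - i').val [MOD k] := by rw [Fin.val_add]; exact Nat.mod_modEq _ _
    _ ≡ wt k i j + wt k i' j' [MOD k] := ((wt_modEq i j).add (wt_modEq i' j')).symm

end Weight

def potential (k w : ℕ) : ℕ := w * (2 * k + 1 - w)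

lemma potential_add_lt {k a b a' b' : ℕ} (ha : 0 < a) (hak : a ≤ k) (hb : 0 < b) (hbk : b ≤ k)
    (ha' : 0 < a') (ha'k : a' ≤ k) (hb' : 0 < b') (hb'k : b' ≤ k)
    (hmod : a' + b' ≡ a + b [MOD k]) (hmin : min a' b' < min a b) :
    potential k a' + potential k b' < potential k a + potential k b := by
  obtain ⟨m, hm⟩ := Nat.modEq_iff_dvd.mp hmod
  unfold potential
  zify [show a ≤ 2 * k + 1 by omega, show b ≤ 2 * k + 1 by omega,
    show a' ≤ 2 * k + 1 by omega, show b' ≤ 2 * k + 1 by omega] at hm ⊢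
  have hm1 : m < 2 := by nlinarith
  have hm2 : -2 < m := by nlinarith
  -- `m = -1` contradicts `hmin`; `m = 1` is a drop of `k` in total weight, which outweighs any
  -- change of the squares; for `m = 0` the pair spreads apart, so its sum of squares grows.
  rcases min_lt_iff.mp hmin with h | h <;> rw [lt_min_iff] at h <;> zify at h <;>
    interval_cases m <;> nlinarith

section Interact

variable {k : ℕ} (s t : AgentState k)

def Swaps : Prop :=
  min (wt k s.bra t.ket) (wt k t.bra s.ket) < min (wt k s.bra s.ket) (wt k t.bra t.ket)

instance : Decidable (Swaps s t) := inferInstanceAs (Decidable (_ < _))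

lemma interact_fst_bra : (interact s t).1.bra = s.bra := by
  unfold interact; dsimp only; split_ifs <;> rfl

lemma interact_snd_bra : (interact s t).2.bra = t.bra := by
  unfold interact; dsimp only; split_ifs <;> rfl

variable {s t}

lemma interact_ket_of_swaps (h : Swaps s t) :
    (interact s t).1.ket = t.ket ∧ (interact s t).2.ket = s.ket := by
  unfold Swaps at h
  unfold interact
  dsimp only
  simp only [if_pos h]
  split_ifs <;> exact ⟨rfl, rfl⟩

lemma interact_of_not_swaps (h : ¬ Swaps s t) :
    interact s t =
      if s.bra = s.ket then (⟨s.bra, s.ket, s.bra⟩, ⟨t.bra, t.ket, s.bra⟩)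
      else if t.bra = t.ket then (⟨s.bra, s.ket, t.bra⟩, ⟨t.bra, t.ket, t.bra⟩)
      else (s, t) := by
  unfold Swaps at h
  unfold interact
  dsimp only
  simp only [if_neg h]

lemma interact_ket_of_not_swaps (h : ¬ Swaps s t) :
    (interact s t).1.ket = s.ket ∧ (interact s t).2.ket = t.ket := by
  rw [interact_of_not_swaps h]; split_ifs <;> exact ⟨rfl, rfl⟩

lemma interact_out_of_not_swaps {μ : Fin k} (h : ¬ Swaps s t)
    (hs : s.bra = s.ket → s.bra = μ) (ht : t.bra = t.ket → t.bra = μ) :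
    (interact s t).1.out = (if s.bra = s.ket ∨ t.bra = t.ket then μ else s.out) ∧
      (interact s t).2.out = (if s.bra = s.ket ∨ t.bra = t.ket then μ else t.out) := by
  rw [interact_of_not_swaps h]; split_ifs <;> simp_all

lemma Swaps.potential_lt [NeZero k] (h : Swaps s t) :
    potential k (wt k s.bra t.ket) + potential k (wt k t.bra s.ket) <
      potential k (wt k s.bra s.ket) + potential k (wt k t.bra t.ket) :=
  potential_add_lt (wt_pos _ _) (wt_le _ _) (wt_pos _ _) (wt_le _ _) (wt_pos _ _) (wt_le _ _)
    (wt_pos _ _) (wt_le _ _) (wt_add_wt_modEq _ _ _ _) h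

end Interact

section Run

variable {k n : ℕ} (χ : Fin n → Fin k) (σ : ℕ → Fin n × Fin n)

lemma run_succ (t : ℕ) (a : Fin n) :
    run χ σ (t + 1) a =
      if a = (σ t).1 then (interact (run χ σ t (σ t).1) (run χ σ t (σ t).2)).1
      else if a = (σ t).2 then (interact (run χ σ t (σ t).1) (run χ σ t (σ t).2)).2
      else run χ σ t a :=
  rfl

def SwapsAt (t : ℕ) : Prop := Swaps (run χ σ t (σ t).1) (run χ σ t (σ t).2)

lemma run_bra (t : ℕ) (a : Fin n) : (run χ σ t a).bra = χ a := by
  induction t generalizing a with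
  | zero => rfl
  | succ t ih =>
    rw [run_succ]
    split_ifs with hp hq
    · rw [interact_fst_bra, ih, hp]
    · rw [interact_snd_bra, ih, hq]
    · exact ih a

lemma exists_perm_run_ket (t : ℕ) :
    ∃ τ : Equiv.Perm (Fin n), ∀ a, (run χ σ t a).ket = χ (τ a) := by
  induction t with
  | zero => exact ⟨Equiv.refl _, fun a => rfl⟩
  | succ t ih =>
    obtain ⟨τ, hτ⟩ := ih
    set p := (σ t).1
    set q := (σ t).2
    by_cases hsw : Swaps (run χ σ t p) (run χ σ t q)
    · refine ⟨(Equiv.swap p q).trans τ, fun a => ?_⟩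
      rw [run_succ]
      split_ifs with hp hq
      · rw [(interact_ket_of_swaps hsw).1, hτ, hp, Equiv.trans_apply, Equiv.swap_apply_left]
      · rw [(interact_ket_of_swaps hsw).2, hτ, hq, Equiv.trans_apply, Equiv.swap_apply_right]
      · rw [hτ, Equiv.trans_apply, Equiv.swap_apply_of_ne_of_ne hp hq]
    · refine ⟨τ, fun a => ?_⟩
      rw [run_succ]
      split_ifs with hp hq
      · rw [(interact_ket_of_not_swaps hsw).1, hτ, hp]
      · rw [(interact_ket_of_not_swaps hsw).2, hτ, hq]
      · exact hτ a

lemma card_run_ket_eq (t : ℕ) (c : Fin k) : #{a | (run χ σ t a).ket = c} = #{a | χ a = c} := by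
  obtain ⟨τ, hτ⟩ := exists_perm_run_ket χ σ t
  exact card_equiv τ fun a => by simp [hτ]

variable {χ σ}

lemma run_ket_succ_of_not_swaps {t : ℕ} (h : ¬ SwapsAt χ σ t) (a : Fin n) :
    (run χ σ (t + 1) a).ket = (run χ σ t a).ket := by
  rw [run_succ]
  split_ifs with hp hq
  · rw [(interact_ket_of_not_swaps h).1, hp]
  · rw [(interact_ket_of_not_swaps h).2, hq]
  · rfl

lemma run_ket_eq_of_le {T : ℕ} (hT : ∀ t ≥ T, ¬ SwapsAt χ σ t) {t : ℕ} (ht : T ≤ t)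
    (a : Fin n) : (run χ σ t a).ket = (run χ σ T a).ket := by
  induction t, ht using Nat.le_induction with
  | base => rfl
  | succ t ht ih => rw [run_ket_succ_of_not_swaps (hT t ht), ih]

lemma run_out_succ {t : ℕ} {μ : Fin k} (h : ¬ SwapsAt χ σ t)
    (hdiag : ∀ b, (run χ σ t b).bra = (run χ σ t b).ket → (run χ σ t b).bra = μ) (a : Fin n) :
    (run χ σ (t + 1) a).out =
      if (a = (σ t).1 ∨ a = (σ t).2) ∧ ((run χ σ t (σ t).1).bra = (run χ σ t (σ t).1).ket ∨
        (run χ σ t (σ t).2).bra = (run χ σ t (σ t).2).ket) then μ else (run χ σ t a).out := by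
  obtain ⟨hp, hq⟩ := interact_out_of_not_swaps h (hdiag _) (hdiag _)
  rw [run_succ]
  split_ifs <;> simp_all

variable (χ σ)

def energy (t : ℕ) : ℕ := ∑ a, potential k (wt k (run χ σ t a).bra (run χ σ t a).ket)

variable {χ σ}

lemma energy_succ_eq {t : ℕ} (h : ¬ SwapsAt χ σ t) : energy χ σ (t + 1) = energy χ σ t := by
  simp only [energy, run_bra, run_ket_succ_of_not_swaps h]

variable [NeZero k]

lemma energy_succ_lt {t : ℕ} (hσ : (σ t).1 ≠ (σ t).2) (h : SwapsAt χ σ t) :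
    energy χ σ (t + 1) < energy χ σ t := by
  refine sum_lt_sum_of_eq_off_pair hσ (fun a hp hq => by rw [run_succ, if_neg hp, if_neg hq]) ?_
  rw [run_succ, if_pos rfl, run_succ, if_neg hσ.symm, if_pos rfl, interact_fst_bra,
    interact_snd_bra, (interact_ket_of_swaps h).1, (interact_ket_of_swaps h).2]
  exact Swaps.potential_lt h

variable (χ) in
theorem exists_forall_ge_not_swaps (hσ : ∀ t, (σ t).1 ≠ (σ t).2) :
    ∃ T, ∀ t ≥ T, ¬ SwapsAt χ σ t := by
  have hanti : Antitone (energy χ σ) := antitone_nat_of_succ_le fun t => by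
    by_cases h : SwapsAt χ σ t
    · exact (energy_succ_lt (hσ t) h).le
    · exact (energy_succ_eq h).le
  refine ⟨Function.argmin (energy χ σ), fun t ht h => ?_⟩
  have := energy_succ_lt (hσ t) h
  have := hanti ht
  have := Function.argmin_le (energy χ σ) (t + 1)
  omega

end Run

def IsStable {k n : ℕ} (χ K : Fin n → Fin k) : Prop :=
  ∀ a b, min (wt k (χ a) (K a)) (wt k (χ b) (K b)) ≤ wt k (χ a) (K b)

lemma isStable_run {k n : ℕ} {χ : Fin n → Fin k} {σ : ℕ → Fin n × Fin n}
    (hfair : ∀ p q : Fin n, p ≠ q → ∀ t : ℕ, ∃ t' : ℕ, t ≤ t' ∧ σ t' = (p, q)) {T : ℕ}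
    (hT : ∀ t ≥ T, ¬ SwapsAt χ σ t) : IsStable χ fun a => (run χ σ T a).ket := by
  intro a b
  rcases eq_or_ne a b with rfl | hab
  · exact min_le_left _ _
  obtain ⟨t, ht, hσt⟩ := hfair a b hab T
  have h := hT t ht
  simp only [SwapsAt, hσt, Swaps, run_bra, run_ket_eq_of_le hT ht] at h
  exact (not_lt.mp h).trans (min_le_left _ _)

section Arcs

variable {k n : ℕ} (χ K : Fin n → Fin k)

/-- Agent `a`, with bra `χ a` and ket `K a`, covers the colors `χ a, χ a + 1, …` strictly before
`K a`, and every color when `K a = χ a`. -/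
def Covers (a : Fin n) (c : Fin k) : Prop := (c - χ a).val < wt k (χ a) (K a)

instance (a : Fin n) (c : Fin k) : Decidable (Covers χ K a c) :=
  inferInstanceAs (Decidable (_ < _))

def coverage (c : Fin k) : ℕ := #{a | Covers χ K a c}

variable {χ K}

lemma covers_of_ket_eq {a : Fin n} (h : K a = χ a) (c : Fin k) : Covers χ K a c := by
  unfold Covers; rw [h, wt_self]; exact (c - χ a).isLt

lemma color_eq_of_ket_eq (hstab : IsStable χ K) {d d' : Fin n} (hd : K d = χ d)
    (hd' : K d' = χ d') : χ d = χ d' := by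
  by_contra hne
  have h := hstab d' d
  rw [hd, hd', wt_self, wt_self, min_self] at h
  exact (wt_lt_of_ne (Ne.symm hne)).not_ge h

variable [NeZero k]

lemma covers_succ_and_not_covers_iff {a : Fin n} {c : Fin k} :
    Covers χ K a (c + 1) ∧ ¬ Covers χ K a c ↔ χ a = c + 1 ∧ χ a ≠ K a := by
  have hx : c + 1 - χ a = (c - χ a) + 1 := by abel
  constructor
  · rintro ⟨h1, h2⟩
    have hnd : χ a ≠ K a := fun h => h2 (covers_of_ket_eq h.symm c)
    refine ⟨?_, hnd⟩
    by_contra hne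
    have hx1 : c - χ a + 1 ≠ 0 := hx ▸ sub_ne_zero.mpr (Ne.symm hne)
    unfold Covers at h1 h2
    rw [hx, val_add_one_of_ne_zero hx1] at h1
    omega
  · rintro ⟨hc, hnd⟩
    have hx1 : c - χ a + 1 = 0 := by rw [← hx, hc, sub_self]
    unfold Covers
    rw [hx, hx1, Fin.val_zero, val_eq_of_add_one_eq_zero hx1]
    have := wt_lt_of_ne hnd
    exact ⟨wt_pos _ _, by omega⟩

lemma covers_and_not_covers_succ_iff {a : Fin n} {c : Fin k} :
    Covers χ K a c ∧ ¬ Covers χ K a (c + 1) ↔ K a = c + 1 ∧ χ a ≠ K a := by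
  have hx : c + 1 - χ a = (c - χ a) + 1 := by abel
  constructor
  · rintro ⟨h1, h2⟩
    have hnd : χ a ≠ K a := fun h => h2 (covers_of_ket_eq h.symm _)
    unfold Covers at h1 h2
    rw [wt_of_ne hnd] at h1 h2
    have hx1 : c - χ a + 1 ≠ 0 := fun h0 => by
      have := val_eq_of_add_one_eq_zero h0
      have := (K a - χ a).isLt
      omega
    rw [hx, val_add_one_of_ne_zero hx1] at h2
    have hK : K a - χ a = c + 1 - χ a := Fin.ext (by rw [hx, val_add_one_of_ne_zero hx1]; omega)
    exact ⟨sub_left_inj.mp hK, hnd⟩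
  · rintro ⟨hK, hnd⟩
    have hx1 : c - χ a + 1 ≠ 0 := by rw [← hx, ← hK, sub_ne_zero]; exact Ne.symm hnd
    unfold Covers
    rw [wt_of_ne hnd, hK, hx, val_add_one_of_ne_zero hx1]
    omega

lemma coverage_eq_card_add_card_ket (c : Fin k) :
    coverage χ K c =
      #{a | Covers χ K a c ∧ Covers χ K a (c + 1)} + #{a | K a = c + 1 ∧ χ a ≠ K a} := by
  rw [coverage, card_filter_eq_add _ fun a => Covers χ K a (c + 1)]
  congr 2
  ext a
  simp only [mem_filter, mem_univ, true_and, covers_and_not_covers_succ_iff]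

lemma coverage_eq_card_add_card_bra (c : Fin k) :
    coverage χ K c =
      #{a | Covers χ K a (c - 1) ∧ Covers χ K a c} + #{a | χ a = c ∧ χ a ≠ K a} := by
  rw [coverage, card_filter_eq_add _ fun a => Covers χ K a (c - 1)]
  congr 2
  · ext a
    simp only [mem_filter, mem_univ, true_and, and_comm]
  · ext a
    simp only [mem_filter, mem_univ, true_and]
    simpa only [sub_add_cancel] using covers_succ_and_not_covers_iff (χ := χ) (K := K) (a := a)
      (c := c - 1)

lemma coverage_eq (hperm : ∀ c, #{a | K a = c} = #{a | χ a = c}) (c c' : Fin k) :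
    coverage χ K c = coverage χ K c' := by
  have hsucc : ∀ c : Fin k, coverage χ K (c + 1) = coverage χ K c := fun c => by
    rw [coverage_eq_card_add_card_bra, coverage_eq_card_add_card_ket, add_sub_cancel_right,
      ← card_eq_and_ne_eq_of_card_eq (hperm (c + 1))]
  rw [apply_eq_apply_zero_of_add_one hsucc c, apply_eq_apply_zero_of_add_one hsucc c']

lemma card_le_coverage {c : Fin k} (h : ∀ a, K a = χ a → χ a ≠ c) :
    #{a | χ a = c} ≤ coverage χ K c := by
  rw [coverage_eq_card_add_card_bra c]
  refine le_add_left (card_le_card fun a => ?_)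
  simp only [mem_filter, mem_univ, true_and]
  exact fun hc => ⟨hc, fun hK => h a hK.symm hc⟩

lemma card_eq_coverage {c : Fin k} (hcross : ∀ a, Covers χ K a (c - 1) → Covers χ K a c → K a = χ a)
    (hdiag : ∀ a, K a = χ a → χ a = c) : #{a | χ a = c} = coverage χ K c := by
  have hcard : #{a | Covers χ K a (c - 1) ∧ Covers χ K a c} = #{a | χ a = c ∧ ¬ χ a ≠ K a} := by
    congr 1
    ext a
    simp only [mem_filter, mem_univ, true_and, not_not]
    constructor
    · rintro ⟨h1, h2⟩
      have hK := hcross a h1 h2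
      exact ⟨hdiag a hK, hK.symm⟩
    · rintro ⟨-, hK⟩
      exact ⟨covers_of_ket_eq hK.symm _, covers_of_ket_eq hK.symm _⟩
  rw [coverage_eq_card_add_card_bra, hcard, card_filter_eq_add _ fun a => χ a ≠ K a, add_comm]

lemma exists_ket_eq_color_of_card_eq_coverage (hperm : ∀ c, #{a | K a = c} = #{a | χ a = c})
    {μ : Fin k} (hmaj : ∀ c, c ≠ μ → #{a | χ a = c} < #{a | χ a = μ}) {c : Fin k} (hc : c ≠ μ)
    (hcov : #{a | χ a = c} = coverage χ K c) : ∃ a, K a = χ a ∧ χ a = μ := by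
  by_contra! h
  have hle := card_le_coverage h
  rw [coverage_eq hperm μ c, ← hcov] at hle
  exact (hmaj c hc).not_ge hle

variable (hstab : IsStable χ K)
include hstab

lemma not_covers_succ {a b : Fin n} {c : Fin k} (hab : wt k (χ a) (K a) ≤ wt k (χ b) (K b))
    (hnd : χ a ≠ K a) (hc : χ b = c + 1 ∨ K b = c + 1) (h : Covers χ K a c) :
    ¬ Covers χ K a (c + 1) := by
  intro hsucc
  have hbra : χ a ≠ c + 1 := fun hbra =>
    (covers_succ_and_not_covers_iff.mpr ⟨hbra, hnd⟩).2 h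
  have hpos := wt_pos (χ a) (c + 1)
  rw [wt_of_ne hbra] at hpos
  unfold Covers at hsucc
  rw [wt_of_ne hnd] at hsucc
  rcases hc with hc | hc
  · have hst := hstab b a
    rw [min_eq_right hab, hc, wt_of_ne hnd] at hst
    have hne : c + 1 ≠ K a := by rintro hK; rw [hK] at hsucc; exact lt_irrefl _ hsucc
    have hsub : K a - (c + 1) = (K a - χ a) - (c + 1 - χ a) := by abel
    rw [wt_of_ne hne, hsub, Fin.coe_sub_iff_le.mpr hsucc.le] at hst
    omega
  · have hst := hstab a b
    rw [min_eq_left hab, hc, wt_of_ne hnd, wt_of_ne hbra] at hst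
    omega

lemma card_eq_coverage_of_max {b : Fin n} (hb : ∀ a, wt k (χ a) (K a) ≤ wt k (χ b) (K b))
    {c : Fin k} (hc : χ b = c ∨ K b = c) (hdiag : ∀ a, K a = χ a → χ a = c) :
    #{a | χ a = c} = coverage χ K c := by
  refine card_eq_coverage (fun a h1 h2 => ?_) hdiag
  by_contra hnd
  rw [← sub_add_cancel c 1] at hc h2
  exact not_covers_succ hstab (hb a) (Ne.symm hnd) hc h1 h2

theorem exists_ket_eq_and_color_eq [Nonempty (Fin n)]
    (hperm : ∀ c, #{a | K a = c} = #{a | χ a = c}) {μ : Fin k}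
    (hmaj : ∀ c, c ≠ μ → #{a | χ a = c} < #{a | χ a = μ}) :
    (∃ d, K d = χ d) ∧ ∀ d, K d = χ d → χ d = μ := by
  obtain ⟨b, hb⟩ := Finite.exists_max fun a => wt k (χ a) (K a)
  by_cases hbd : K b = χ b
  · have hcolor : ∀ a, K a = χ a → χ a = χ b := fun a ha => color_eq_of_ket_eq hstab ha hbd
    refine ⟨⟨b, hbd⟩, fun d hd => ?_⟩
    rw [hcolor d hd]
    by_contra hne
    obtain ⟨a, ha, haμ⟩ := exists_ket_eq_color_of_card_eq_coverage hperm hmaj hne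
      (card_eq_coverage_of_max hstab hb (Or.inl rfl) hcolor)
    exact hne (hcolor a ha ▸ haμ)
  · have hnodiag : ∀ a, K a ≠ χ a := fun a ha => by
      have := hb a
      rw [ha, wt_self] at this
      exact (wt_lt_of_ne (Ne.symm hbd)).not_ge this
    have hvac (c : Fin k) : ∀ a, K a = χ a → χ a = c := fun a ha => (hnodiag a ha).elim
    exfalso
    have hμ : χ b ≠ μ ∨ K b ≠ μ := by
      by_contra! h
      exact hbd (h.2.trans h.1.symm)
    obtain ⟨a, ha, -⟩ := hμ.elim
      (fun hμ => exists_ket_eq_color_of_card_eq_coverage hperm hmaj hμ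
        (card_eq_coverage_of_max hstab hb (Or.inl rfl) (hvac _)))
      (fun hμ => exists_ket_eq_color_of_card_eq_coverage hperm hmaj hμ
        (card_eq_coverage_of_max hstab hb (Or.inr rfl) (hvac _)))
    exact hnodiag a ha

end Arcs

theorem eventually_out_eq {k n : ℕ} {χ : Fin n → Fin k} {σ : ℕ → Fin n × Fin n} [Nontrivial (Fin n)]
    (hfair : ∀ p q : Fin n, p ≠ q → ∀ t : ℕ, ∃ t' : ℕ, t ≤ t' ∧ σ t' = (p, q)) {T : ℕ}
    (hT : ∀ t ≥ T, ¬ SwapsAt χ σ t) {d : Fin n} {μ : Fin k}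
    (hd : (run χ σ T d).ket = χ d) (hdiag : ∀ a, (run χ σ T a).ket = χ a → χ a = μ)
    (a : Fin n) : ∀ᶠ t in atTop, (run χ σ t a).out = μ := by
  have hstep (t : ℕ) (ht : T ≤ t) := run_out_succ (hT t ht) (μ := μ) fun b hb => by
    rw [run_bra, run_ket_eq_of_le hT ht] at hb
    rw [run_bra]
    exact hdiag b hb.symm
  have hd_diag (t : ℕ) (ht : T ≤ t) : (run χ σ t d).bra = (run χ σ t d).ket := by
    rw [run_bra, run_ket_eq_of_le hT ht, hd]
  obtain ⟨e, hea, hed⟩ : ∃ e, e ≠ a ∧ (a = d ∨ e = d) := by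
    by_cases had : a = d
    · obtain ⟨e, he⟩ := exists_ne a
      exact ⟨e, he, Or.inl had⟩
    · exact ⟨d, Ne.symm had, Or.inr rfl⟩
  obtain ⟨t₀, ht₀, hσt⟩ := hfair a e hea.symm T
  refine eventually_atTop.mpr ⟨t₀ + 1, fun t ht => ?_⟩
  induction t, ht using Nat.le_induction with
  | base =>
    rw [hstep t₀ ht₀, hσt, if_pos]
    refine ⟨Or.inl rfl, ?_⟩
    rcases hed with rfl | rfl
    exacts [Or.inl (hd_diag t₀ ht₀), Or.inr (hd_diag t₀ ht₀)]
  | succ t ht ih => rw [hstep t (by omega), ih, ite_self]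

end PRM

theorem prm_correctness_general {k n : ℕ}
    (χ : Fin n → Fin k) (μ : Fin k)
    (hmaj : ∀ j : Fin k, j ≠ μ →
      (Finset.univ.filter (fun a => χ a = j)).card <
        (Finset.univ.filter (fun a => χ a = μ)).card)
    (σ : ℕ → Fin n × Fin n)
    (hσ : ∀ t : ℕ, (σ t).1 ≠ (σ t).2)
    (hfair : ∀ p q : Fin n, p ≠ q → ∀ t : ℕ, ∃ t' : ℕ, t ≤ t' ∧ σ t' = (p, q)) :
    ∃ T : ℕ, ∀ t : ℕ, T ≤ t → ∀ a : Fin n, (run χ σ t a).out = μ := by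
  have : NeZero k := ⟨μ.pos.ne'⟩
  have : Nontrivial (Fin n) := nontrivial_of_ne _ _ (hσ 0)
  obtain ⟨T, hT⟩ := PRM.exists_forall_ge_not_swaps χ hσ
  obtain ⟨⟨d, hd⟩, hdiag⟩ := PRM.exists_ket_eq_and_color_eq (PRM.isStable_run hfair hT)
    (PRM.card_run_ket_eq χ σ T) hmaj
  exact eventually_atTop.mp
    (eventually_all.mpr fun a => PRM.eventually_out_eq hfair hT hd hdiag a)

/-- Theorem (Correctness): if the input assignment has a unique relative-majority
color `μ` and the schedule is weakly fair, then all agents eventually output `μ`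
forever. -/
theorem prm_correctness {k n : ℕ} (hk : 1 ≤ k) (hn : 1 ≤ n)
    (χ : Fin n → Fin k) (μ : Fin k)
    (hmaj : ∀ j : Fin k, j ≠ μ →
      (Finset.univ.filter (fun a => χ a = j)).card <
        (Finset.univ.filter (fun a => χ a = μ)).card)
    (σ : ℕ → Fin n × Fin n)
    (hσ : ∀ t : ℕ, (σ t).1 ≠ (σ t).2)
    (hfair : ∀ p q : Fin n, p ≠ q → ∀ t : ℕ, ∃ t' : ℕ, t ≤ t' ∧ σ t' = (p, q)) :
    ∃ T : ℕ, ∀ t : ℕ, T ≤ t → ∀ a : Fin n, (run χ σ t a).out = μ :=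
  prm_correctness_general χ μ hmaj σ hσ hfair
end
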